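/- Let v > 0, let 0 < a < v, let g : ℝ → ℝ be given by g(x) = (2/π) · sin²(a x / 2)/(a x²) for x ≠ 0 and g(0) = a/(2π), and let h : ℝ → ℝ be integrable on (0, ∞). Then for every λ ∈ ℝ with |λ| ≥ 1, ∫_{ℝ × (0,∞)} g(x) h(z) e^{-λ² v z} e^{-i λ v x} dx dz = 0; that is, the infinite-length hull f(x,z) = g(x) h(z) has zero Michell wave resistance at Kelvin wave number v. -/

import Mathlib

/-!
Writing `fejerKernel a x = a / (2π) · sinc (a x / 2)²` shows that it is integrable, and a direct
computation shows that it is, up to the factor `2π` and the rescaling `x = 2πξ`, the Fourier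
transform of the triangle function `max 0 (1 - |t| / a)`. Fourier inversion then identifies
`∫ fejerKernel a x · e^{-icx} dx` with the triangle function at `c`, which vanishes for `|c| ≥ a`.
The hull integrand factors into an `x`-part of frequency `λ v` and a `z`-part, and
`|λ v| ≥ v > a`, so the `x`-integral is already zero.
-/

open Complex Real MeasureTheory Set

/-- The Fejér-type kernel of parameter `a`, extended by continuity at `0`. -/
noncomputable def fejerKernel (a : ℝ) (x : ℝ) : ℝ :=
  if x = 0 then a / (2 * Real.pi)
  else (2 / Real.pi) * (Real.sin (a * x / 2))^2 / (a * x^2)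

open FourierTransform

lemma Real.sq_mul_sinc_sq (y : ℝ) : y ^ 2 * sinc y ^ 2 = Real.sin y ^ 2 := by
  rcases eq_or_ne y 0 with rfl | hy
  · simp
  · rw [sinc_of_ne_zero hy]; field_simp

lemma Real.sinc_sq_le_two_mul_inv_one_add_sq (y : ℝ) : sinc y ^ 2 ≤ 2 * (1 + y ^ 2)⁻¹ := by
  rw [le_mul_inv_iff₀ (by positivity)]
  have hsinc : sinc y ^ 2 ≤ 1 := by
    rw [sq_le_one_iff_abs_le_one]; exact abs_sinc_le_one y
  nlinarith [sq_mul_sinc_sq y, sin_sq_le_one y]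

lemma Real.integrable_sinc_sq : Integrable fun y ↦ sinc y ^ 2 :=
  (integrable_inv_one_add_sq.const_mul 2).mono'
    (continuous_sinc.pow 2).aestronglyMeasurable
    (Filter.Eventually.of_forall fun y ↦ by
      rw [Real.norm_of_nonneg (by positivity)]; exact sinc_sq_le_two_mul_inv_one_add_sq y)

lemma fejerKernel_eq_sinc {a : ℝ} (ha : a ≠ 0) (x : ℝ) :
    fejerKernel a x = a / (2 * π) * sinc (a * x / 2) ^ 2 := by
  rcases eq_or_ne x 0 with rfl | hx
  · simp [fejerKernel]
  · rw [fejerKernel, if_neg hx, sinc_of_ne_zero (by positivity)]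
    field_simp

lemma integrable_fejerKernel {a : ℝ} (ha : a ≠ 0) : Integrable (fejerKernel a) := by
  simp_rw [funext (fejerKernel_eq_sinc ha)]
  exact (integrable_sinc_sq.comp_div two_ne_zero |>.comp_mul_left' ha).const_mul _

theorem Real.fourier_ofReal_of_even {f : ℝ → ℝ} (hf : Integrable f) (heven : ∀ t, f (-t) = f t)
    (ξ : ℝ) : 𝓕 (fun t ↦ (f t : ℂ)) ξ = ((∫ t, f t * Real.cos (2 * π * ξ * t) : ℝ) : ℂ) := by
  set F : ℝ → ℂ := fun t ↦ (f t : ℂ)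
  have hsymm : 𝓕 F (-ξ) = 𝓕 F ξ := by
    rw [← fourierInv_eq_fourier_neg, fourierInv_eq_fourier_comp_neg]
    simp_rw [F, heven]
  have hint (w : ℝ) : Integrable (fun t : ℝ ↦ 𝐞 (-inner ℝ t w) • F t) :=
    (Real.fourierIntegral_convergent_iff w).2 hf.ofReal
  rw [← integral_complex_ofReal]
  calc 𝓕 F ξ = (𝓕 F ξ + 𝓕 F (-ξ)) / 2 := by rw [hsymm]; ring
  _ = ∫ t, (𝐞 (-inner ℝ t ξ) • F t + 𝐞 (-inner ℝ t (-ξ)) • F t) / 2 := by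
    rw [integral_div, integral_add (hint ξ) (hint (-ξ))]; rfl
  _ = _ := by
    congr 1; funext t
    simp only [F, RCLike.inner_apply, conj_trivial, Circle.smul_def, fourierChar_apply, smul_eq_mul,
      ofReal_mul, ofReal_neg, ofReal_ofNat, ofReal_cos, Complex.cos]
    ring_nf

noncomputable def triangle (a t : ℝ) : ℝ := max 0 (1 - |t| / a)

lemma continuous_triangle (a : ℝ) : Continuous (triangle a) := by
  unfold triangle; fun_prop

lemma triangle_neg (a t : ℝ) : triangle a (-t) = triangle a t := by
  simp [triangle]

section triangle
variable {a : ℝ}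

lemma triangle_eq_zero (ha : 0 < a) {t : ℝ} (ht : a ≤ |t|) : triangle a t = 0 := by
  rw [triangle, max_eq_left]
  rwa [sub_nonpos, one_le_div ha]

lemma triangle_of_abs_le (ha : 0 < a) {t : ℝ} (ht : |t| ≤ a) : triangle a t = 1 - |t| / a := by
  rw [triangle, max_eq_right]
  rwa [sub_nonneg, div_le_one ha]

lemma hasCompactSupport_triangle (ha : 0 < a) : HasCompactSupport (triangle a) :=
  HasCompactSupport.intro (isCompact_closedBall 0 a) fun t ht ↦
    triangle_eq_zero ha (by simpa using ht : a < |t|).le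

lemma integrable_triangle (ha : 0 < a) : Integrable (triangle a) :=
  (continuous_triangle a).integrable_of_hasCompactSupport (hasCompactSupport_triangle ha)

lemma integral_one_sub_div_mul_cos (ha : a ≠ 0) (b : ℝ) :
    ∫ s in 0..a, (1 - s / a) * Real.cos (b * s) = π * fejerKernel a b := by
  rcases eq_or_ne b 0 with rfl | hb
  · simp only [zero_mul, Real.cos_zero, mul_one, fejerKernel, if_pos]
    rw [intervalIntegral.integral_sub intervalIntegrable_const
      (intervalIntegral.intervalIntegrable_id.div_const a), intervalIntegral.integral_div,
      integral_id, intervalIntegral.integral_const]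
    field_simp; ring
  · have hderiv : ∀ s ∈ uIcc 0 a, HasDerivAt
        (fun s ↦ (1 - s / a) * Real.sin (b * s) / b - Real.cos (b * s) / (a * b ^ 2))
        ((1 - s / a) * Real.cos (b * s)) s := by
      intro s _
      have hlin : HasDerivAt (fun s ↦ b * s) b s := by simpa using (hasDerivAt_id s).const_mul b
      have hdecay : HasDerivAt (fun s ↦ 1 - s / a) (-(1 / a)) s := by
        simpa using ((hasDerivAt_id s).div_const a).const_sub 1
      refine ((hdecay.mul hlin.sin).div_const b |>.sub
        (hlin.cos.div_const (a * b ^ 2))).congr_deriv ?_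
      field_simp; ring
    rw [intervalIntegral.integral_eq_sub_of_hasDerivAt hderiv
      ((by fun_prop : Continuous _).intervalIntegrable _ _), fejerKernel, if_neg hb,
      Real.sin_sq_eq_half_sub]
    simp only [mul_zero, zero_div, sub_zero, Real.sin_zero, Real.cos_zero]
    field_simp
    ring

lemma integral_triangle_mul_cos (ha : 0 < a) (b : ℝ) :
    ∫ t, triangle a t * Real.cos (b * t) = 2 * π * fejerKernel a b := by
  have habs : ∀ t, triangle a t * Real.cos (b * t) = triangle a |t| * Real.cos (b * |t|) := by
    intro t; rcases abs_choice t with h | h <;> simp [h, triangle]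
  have hsupp : ∀ t ∈ Ioi 0 \ Ioc 0 a, triangle a t * Real.cos (b * t) = 0 := by
    rintro t ⟨ht0, hta⟩
    rw [triangle_eq_zero ha, zero_mul]
    simp only [mem_Ioi, mem_Ioc, not_and, not_le] at ht0 hta
    exact (abs_of_pos ht0).symm ▸ (hta ht0).le
  rw [integral_congr_ae (Filter.Eventually.of_forall habs),
    integral_comp_abs (f := fun t ↦ triangle a t * Real.cos (b * t)),
    setIntegral_eq_of_subset_of_forall_sdiff_eq_zero measurableSet_Ioi Ioc_subset_Ioi_self hsupp,
    ← intervalIntegral.integral_of_le ha.le, mul_assoc, ← integral_one_sub_div_mul_cos ha.ne']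
  congr 1
  refine intervalIntegral.integral_congr fun s hs ↦ ?_
  rw [uIcc_of_le ha.le] at hs
  simp only [triangle_of_abs_le ha (abs_le.2 ⟨by linarith [hs.1], hs.2⟩), abs_of_nonneg hs.1]

lemma fourier_triangle (ha : 0 < a) (ξ : ℝ) :
    𝓕 (fun t ↦ (triangle a t : ℂ)) ξ = ((2 * π * fejerKernel a (2 * π * ξ) : ℝ) : ℂ) := by
  rw [Real.fourier_ofReal_of_even (integrable_triangle ha) (triangle_neg a),
    integral_triangle_mul_cos ha]

theorem integral_fejerKernel_mul_exp (ha : 0 < a) (c : ℝ) :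
    ∫ x, (fejerKernel a x : ℂ) * Complex.exp (-(Complex.I * c * x)) = triangle a c := by
  have hF : 𝓕 (fun t ↦ (triangle a t : ℂ)) =
      fun ξ ↦ ((2 * π * fejerKernel a (2 * π * ξ) : ℝ) : ℂ) := funext (fourier_triangle ha)
  have hFint : Integrable (𝓕 (fun t ↦ (triangle a t : ℂ))) := by
    rw [hF]
    exact (((integrable_fejerKernel ha.ne').comp_mul_left' (by positivity)).const_mul _).ofReal
  have hinv := (integrable_triangle ha).ofReal.fourierInv_fourier_eq hFint
    (continuous_ofReal.comp (continuous_triangle a)).continuousAt (v := -c)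
  rw [hF, fourierInv_eq', triangle_neg] at hinv
  set g : ℝ → ℂ := fun x ↦ (fejerKernel a x : ℂ) * Complex.exp (-(Complex.I * c * x))
  have hsubst : ∀ v : ℝ, Complex.exp (↑(2 * π * inner ℝ v (-c)) * Complex.I) •
      ((2 * π * fejerKernel a (2 * π * v) : ℝ) : ℂ) = (2 * π) • g (2 * π * v) := by
    intro v
    simp only [g, RCLike.inner_apply, conj_trivial, real_smul, smul_eq_mul]
    push_cast
    ring_nf
  have h2π : (2 * π)⁻¹ * (2 * π) = 1 := inv_mul_cancel₀ (by positivity)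
  rw [← hinv, integral_congr_ae (Filter.Eventually.of_forall hsubst), integral_smul,
    Measure.integral_comp_mul_left, smul_smul, abs_of_pos (by positivity), mul_comm, h2π, one_smul]

end triangle

theorem stmt13_general (v a : ℝ) (hv : 0 < v) (ha : 0 < a) (hav : a < v)
    (h : ℝ → ℝ)
    (lam : ℝ) (hlam : 1 ≤ |lam|) :
    (∫ p in (univ : Set ℝ) ×ˢ (Ioi (0:ℝ)),
        (fejerKernel a p.1 : ℂ) * (h p.2 : ℂ) *
          Complex.exp (-(lam^2 * v * p.2 : ℝ)) *
          Complex.exp (-(Complex.I * lam * v * p.1))) = 0 := by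
  set xPart : ℝ → ℂ := fun x ↦ (fejerKernel a x : ℂ) * Complex.exp (-(Complex.I * lam * v * x))
  set zPart : ℝ → ℂ := fun z ↦ (h z : ℂ) * Complex.exp (-(lam^2 * v * z : ℝ))
  have hfreq : a ≤ |lam * v| := by
    rw [abs_mul, abs_of_pos hv]; nlinarith
  have hxPart : ∫ x, xPart x = 0 := by
    simpa [xPart, mul_assoc, triangle_eq_zero ha hfreq] using
      integral_fejerKernel_mul_exp ha (lam * v)
  calc _ = ∫ p in (univ : Set ℝ) ×ˢ (Ioi (0:ℝ)), xPart p.1 * zPart p.2 := by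
        congr 1; funext p; simp only [xPart, zPart]; ring
  _ = 0 := by
    rw [Measure.volume_eq_prod, setIntegral_prod_mul, Measure.restrict_univ, hxPart, zero_mul]

theorem stmt13 (v a : ℝ) (hv : 0 < v) (ha : 0 < a) (hav : a < v)
    (h : ℝ → ℝ) (hh : IntegrableOn h (Ioi 0))
    (lam : ℝ) (hlam : 1 ≤ |lam|) :
    (∫ p in (univ : Set ℝ) ×ˢ (Ioi (0:ℝ)),
        (fejerKernel a p.1 : ℂ) * (h p.2 : ℂ) *
          Complex.exp (-(lam^2 * v * p.2 : ℝ)) *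
          Complex.exp (-(Complex.I * lam * v * p.1))) = 0 :=
  stmt13_general v a hv ha hav h lam hlam
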